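/- arXiv:1306.0819 — 8 statements merged into one kernel-verified Lean document; each statement's English description precedes it below -/
import Mathlib

section
/- For a graph G and a set C of vertices, if C is a dominating set and for every pair of distinct vertices u, v at distance at most two from each other we have N[u] ∩ C ≠ N[v] ∩ C, then C is an identifying code of G (i.e., C also separates all pairs of vertices at distance 3 or more). -/
/-- The closed neighborhood of a vertex. -/
def closedNbr {V : Type*} (G : SimpleGraph V) (v : V) : Set V := insert v (G.neighborSet v)

/-- `C` is a dominating set: every vertex outside `C` has a neighbor in `C`. -/
def Dominating {V : Type*} (G : SimpleGraph V) (C : Set V) : Prop :=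
  ∀ v ∉ C, ∃ c ∈ C, G.Adj v c

/-- `C` is a separating set: distinct vertices have distinct traces `N[v] ∩ C`. -/
def Separating {V : Type*} (G : SimpleGraph V) (C : Set V) : Prop :=
  ∀ u v : V, u ≠ v → closedNbr G u ∩ C ≠ closedNbr G v ∩ C

/-!
Two vertices with the same trace `N[u] ∩ C = N[v] ∩ C` share every vertex of that trace, and the
trace is nonempty because `C` is dominating. A shared vertex of `N[u]` and `N[v]` puts `u` and `v`
at distance at most two, where they are separated by hypothesis.
-/

namespace SimpleGraph

variable {V : Type*} {G : SimpleGraph V}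

lemma exists_walk_length_le_one_of_mem_closedNbr {u w : V} (hw : w ∈ closedNbr G u) :
    ∃ p : G.Walk u w, p.length ≤ 1 := by
  rcases hw with rfl | hadj
  · exact ⟨.nil, by simp⟩
  · exact ⟨(G.mem_neighborSet u w).1 hadj |>.toWalk, by simp⟩

lemma reachable_and_dist_le_two_of_mem_closedNbr {u v w : V}
    (hu : w ∈ closedNbr G u) (hv : w ∈ closedNbr G v) :
    G.Reachable u v ∧ G.dist u v ≤ 2 := by
  obtain ⟨p, hp⟩ := exists_walk_length_le_one_of_mem_closedNbr hu
  obtain ⟨q, hq⟩ := exists_walk_length_le_one_of_mem_closedNbr hv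
  refine ⟨⟨p.append q.reverse⟩, (dist_le (p.append q.reverse)).trans ?_⟩
  simp only [Walk.length_append, Walk.length_reverse]
  omega

lemma closedNbr_inter_nonempty_of_dominating {C : Set V} (hdom : Dominating G C) (v : V) :
    (closedNbr G v ∩ C).Nonempty := by
  by_cases hv : v ∈ C
  · exact ⟨v, Set.mem_insert v _, hv⟩
  · obtain ⟨c, hc, hadj⟩ := hdom v hv
    exact ⟨c, Set.mem_insert_of_mem v hadj, hc⟩

lemma separating_of_separating_dist_le_two {C : Set V} (hdom : Dominating G C)
    (hsep2 : ∀ u v : V, u ≠ v → G.Reachable u v → G.dist u v ≤ 2 →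
      closedNbr G u ∩ C ≠ closedNbr G v ∩ C) :
    Separating G C := by
  intro u v huv heq
  obtain ⟨w, hwu, hwC⟩ := closedNbr_inter_nonempty_of_dominating hdom u
  have hwv : w ∈ closedNbr G v := (heq ▸ ⟨hwu, hwC⟩ : w ∈ closedNbr G v ∩ C).1
  obtain ⟨hreach, hdist⟩ := reachable_and_dist_le_two_of_mem_closedNbr hwu hwv
  exact hsep2 u v huv hreach hdist heq

end SimpleGraph

theorem stmt0_general {V : Type*} (G : SimpleGraph V) (C : Set V)
    (hdom : Dominating G C)
    (hsep2 : ∀ u v : V, u ≠ v → G.Reachable u v → G.dist u v ≤ 2 →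
      closedNbr G u ∩ C ≠ closedNbr G v ∩ C) :
    Dominating G C ∧ Separating G C :=
  ⟨hdom, SimpleGraph.separating_of_separating_dist_le_two hdom hsep2⟩

theorem stmt0 {V : Type*} [Fintype V] (G : SimpleGraph V) (C : Set V)
    (hdom : Dominating G C)
    (hsep2 : ∀ u v : V, u ≠ v → G.Reachable u v → G.dist u v ≤ 2 →
      closedNbr G u ∩ C ≠ closedNbr G v ∩ C) :
    Dominating G C ∧ Separating G C :=
  stmt0_general G C hdom hsep2
end

section
/- For any M' ≥ 0 there exists a constant c₀ > 0 such that for all sufficiently large n, any graph G on n vertices admitting an identifying code of size at most M'·log n has at least c₀·n·log n edges. -/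
def IsIdCode {V : Type*} (G : SimpleGraph V) (C : Set V) : Prop :=
  Dominating G C ∧ Separating G C

lemma aux_factorial (k : ℕ) : (k:ℝ)^k ≤ Real.exp k * (k.factorial : ℝ) := by
  have h := Real.sum_le_exp_of_nonneg (x := (k:ℝ)) (by positivity) (k+1)
  have hterm : (k:ℝ)^k / (k.factorial : ℝ) ≤ Real.exp k := by
    refine le_trans ?_ h
    exact Finset.single_le_sum (f := fun i => (k:ℝ)^i / (i.factorial : ℝ))
      (fun i _ => by positivity) (Finset.self_mem_range_succ k)
  have hf : (0:ℝ) < (k.factorial : ℝ) := by exact_mod_cast k.factorial_pos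
  linarith [(div_le_iff₀ hf).mp hterm]

lemma aux_choose_sum (m k : ℕ) : ∑ i ∈ Finset.range (k+1), m.choose i ≤ (m+k).choose k := by
  rw [Nat.add_choose_eq, Finset.Nat.sum_antidiagonal_eq_sum_range_succ_mk]
  refine Finset.sum_le_sum fun i hi => ?_
  have : 0 < k.choose (k - i) := Nat.choose_pos (Nat.sub_le _ _)
  calc m.choose i = m.choose i * 1 := (mul_one _).symm
    _ ≤ _ := Nat.mul_le_mul_left _ this

lemma aux_count {α : Type*} [DecidableEq α] (s : Finset α) (k : ℕ) :
    (s.powerset.filter fun A => A.card ≤ k).card ≤ ∑ i ∈ Finset.range (k+1), s.card.choose i := by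
  have hsub : (s.powerset.filter fun A => A.card ≤ k) ⊆
      (Finset.range (k+1)).biUnion (fun i => Finset.powersetCard i s) := by
    intro A hA
    simp only [Finset.mem_filter, Finset.mem_powerset] at hA
    refine Finset.mem_biUnion.mpr ⟨A.card, Finset.mem_range_succ_iff.mpr hA.2, ?_⟩
    simp [Finset.mem_powersetCard, hA.1]
  calc (s.powerset.filter fun A => A.card ≤ k).card
      ≤ _ := Finset.card_le_card hsub
    _ ≤ ∑ i ∈ Finset.range (k+1), (Finset.powersetCard i s).card := Finset.card_biUnion_le
    _ = _ := by simp [Finset.card_powersetCard]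

set_option maxHeartbeats 1000000 in
theorem stmt5 (M' : ℝ) (hM' : 0 ≤ M') :
    ∃ c₀ : ℝ, 0 < c₀ ∧ ∃ N : ℕ, ∀ n ≥ N, ∀ G : SimpleGraph (Fin n), ∀ C : Set (Fin n),
      IsIdCode G C → (C.ncard : ℝ) ≤ M' * Real.log n →
      c₀ * n * Real.log n ≤ (G.edgeSet.ncard : ℝ) := by
  classical
  set t : ℝ := max (8*(1+Real.log (M'+2))) 256 with ht
  have ht256 : (256:ℝ) ≤ t := le_max_right _ _
  have ht8 : 8*(1+Real.log (M'+2)) ≤ t := le_max_left _ _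
  have htpos : (0:ℝ) < t := by linarith
  have ht1 : (1:ℝ) ≤ t := by linarith
  -- log t ≤ t/8
  have hlogt : Real.log t ≤ t/8 := by
    have hst : (0:ℝ) < Real.sqrt t := Real.sqrt_pos.mpr htpos
    have h1 : Real.log (Real.sqrt t) = Real.log t / 2 := Real.log_sqrt htpos.le
    have h2 : Real.log (Real.sqrt t) ≤ Real.sqrt t - 1 := Real.log_le_sub_one_of_pos hst
    have h3 : (16:ℝ) ≤ Real.sqrt t := by
      rw [show (16:ℝ) = Real.sqrt 256 by
        rw [show (256:ℝ) = 16^2 by norm_num, Real.sqrt_sq (by norm_num)]]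
      exact Real.sqrt_le_sqrt ht256
    have h4 : Real.sqrt t * Real.sqrt t = t := Real.mul_self_sqrt htpos.le
    nlinarith
  set R0 : ℝ := Real.exp 1 * (M'+2) * t with hR0
  have hexp1 : (2:ℝ) ≤ Real.exp 1 := by
    have := Real.exp_one_gt_d9
    linarith
  have hR0pos : (0:ℝ) < R0 := by
    have := Real.exp_pos 1
    positivity
  have hR0ge1 : (1:ℝ) ≤ R0 := by
    have hstep : (4:ℝ) ≤ Real.exp 1 * (M'+2) := by nlinarith
    nlinarith [mul_le_mul hstep ht1 (by norm_num : (0:ℝ) ≤ 1)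
      (by linarith : (0:ℝ) ≤ Real.exp 1 * (M'+2))]
  have hlogR0 : Real.log R0 ≤ t/4 := by
    have hM2 : (0:ℝ) < M'+2 := by linarith
    have e1 : Real.log R0 = 1 + Real.log (M'+2) + Real.log t := by
      rw [hR0, Real.log_mul (by positivity) (ne_of_gt htpos),
        Real.log_mul (by positivity) (ne_of_gt hM2), Real.log_exp]
    rw [e1]; linarith
  -- choose N
  have hev : ∀ᶠ n : ℕ in Filter.atTop,
      2*R0 ≤ (n:ℝ)^((3:ℝ)/4) ∧ 3 ≤ n := by
    have h1 : Filter.Tendsto (fun n : ℕ => (n:ℝ)^((3:ℝ)/4)) Filter.atTop Filter.atTop :=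
      (tendsto_rpow_atTop (by norm_num)).comp tendsto_natCast_atTop_atTop
    exact (h1.eventually_ge_atTop (2*R0)).and (Filter.eventually_ge_atTop 3)
  obtain ⟨N, hN⟩ := Filter.eventually_atTop.mp hev
  refine ⟨1/(4*t), by positivity, N, ?_⟩
  intro n hn G C hcode hsize
  obtain ⟨hrpow, hn3⟩ := hN n hn
  have hnpos : (0:ℝ) < n := by exact_mod_cast Nat.lt_of_lt_of_le (by norm_num) hn3
  have hlogn1 : (1:ℝ) ≤ Real.log n := by
    rw [Real.le_log_iff_exp_le hnpos]
    have := Real.exp_one_lt_d9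
    have h3 : (3:ℝ) ≤ n := by exact_mod_cast hn3
    linarith
  have hlognpos : (0:ℝ) < Real.log n := by linarith
  set k : ℕ := ⌈Real.log n / t⌉₊ with hk
  have hk1 : Real.log n / t ≤ (k:ℝ) := Nat.le_ceil _
  have hk2 : (k:ℝ) ≤ Real.log n / t + 1 := (Nat.ceil_lt_add_one (by positivity)).le
  have hkpos : 0 < k := Nat.ceil_pos.mpr (by positivity)
  have hkposR : (0:ℝ) < k := by exact_mod_cast hkpos
  set C' : Finset (Fin n) := C.toFinset with hC'
  set m : ℕ := C'.card with hm
  have hmle : (m:ℝ) ≤ M' * Real.log n := by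
    rwa [Set.ncard_eq_toFinset_card' C] at hsize
  set φ : Fin n → Finset (Fin n) := fun v => (insert v (G.neighborFinset v)) ∩ C' with hφ
  have hφcoe : ∀ v, (φ v : Set (Fin n)) = closedNbr G v ∩ C := by
    intro v
    simp [hφ, closedNbr, Finset.coe_inter, Set.coe_toFinset,
      SimpleGraph.neighborFinset_def, hC']
  have hinj : Function.Injective φ := by
    intro u v huv
    by_contra hne
    exact hcode.2 u v hne (by rw [← hφcoe, ← hφcoe, huv])
  set S : Finset (Fin n) := Finset.univ.filter (fun v => G.degree v < k) with hS
  have hmaps : ∀ v ∈ S, φ v ∈ C'.powerset.filter (fun A => A.card ≤ k) := by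
    intro v hv
    simp only [hS, Finset.mem_filter, Finset.mem_univ, true_and] at hv
    simp only [Finset.mem_filter, Finset.mem_powerset]
    refine ⟨Finset.inter_subset_right, ?_⟩
    calc (φ v).card ≤ (insert v (G.neighborFinset v)).card :=
          Finset.card_le_card Finset.inter_subset_left
      _ ≤ (G.neighborFinset v).card + 1 := Finset.card_insert_le _ _
      _ = G.degree v + 1 := by rw [G.card_neighborFinset_eq_degree]
      _ ≤ k := hv
  have hScard : S.card ≤ (m+k).choose k :=
    le_trans (Finset.card_le_card_of_injOn φ hmaps hinj.injOn)
      (le_trans (aux_count C' k) (aux_choose_sum m k))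
  -- real bound on choose
  have hkf : (0:ℝ) < (k.factorial : ℝ) := by exact_mod_cast k.factorial_pos
  have hkk : (0:ℝ) < (k:ℝ)^k := pow_pos hkposR k
  have h2 : ((m+k).choose k : ℝ) * (k.factorial : ℝ) ≤ ((m:ℝ)+k)^k := by
    have hn1 : (m+k).descFactorial k ≤ (m+k)^k := Nat.descFactorial_le_pow _ _
    have hn2 : (m+k).descFactorial k = k.factorial * ((m+k).choose k) :=
      Nat.descFactorial_eq_factorial_mul_choose _ _
    rw [hn2] at hn1
    have := (Nat.cast_le (α := ℝ)).mpr hn1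
    push_cast at this
    linarith
  have h3 : (k:ℝ)^k ≤ Real.exp k * (k.factorial : ℝ) := aux_factorial k
  have hmk0 : (0:ℝ) ≤ (m:ℝ)+k := by positivity
  have h4 : ((m+k).choose k : ℝ) ≤ (((m:ℝ)+k) * Real.exp 1 / k)^k := by
    have e1 : (((m:ℝ)+k) * Real.exp 1 / k)^k
        = ((m:ℝ)+k)^k * (Real.exp 1)^k / (k:ℝ)^k := by
      rw [div_pow, mul_pow]
    have e2 : Real.exp (k:ℝ) = (Real.exp 1)^k := by
      rw [← Real.exp_nat_mul]; norm_num
    rw [e1]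
    rw [le_div_iff₀ hkk, ← e2]
    have hc1 : ((m+k).choose k : ℝ) * (k:ℝ)^k
        ≤ ((m+k).choose k : ℝ) * (Real.exp k * (k.factorial : ℝ)) := by
      have : (0:ℝ) ≤ ((m+k).choose k : ℝ) := by positivity
      exact mul_le_mul_of_nonneg_left h3 this
    have hc2 : ((m+k).choose k : ℝ) * (Real.exp k * (k.factorial : ℝ))
        ≤ ((m:ℝ)+k)^k * Real.exp k := by
      have hek : (0:ℝ) < Real.exp k := Real.exp_pos _
      nlinarith [h2]
    linarith
  have hbase : ((m:ℝ)+k) * Real.exp 1 / k ≤ R0 := by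
    rw [div_le_iff₀ hkposR]
    have hmk : (m:ℝ)+k ≤ (M'+2) * (t*(k:ℝ)) := by
      have h5 : (k:ℝ) ≤ 2 * Real.log n := by
        have : Real.log n / t ≤ Real.log n := by
          rw [div_le_iff₀ htpos]; nlinarith
        linarith
      have h6 : (m:ℝ)+k ≤ (M'+2) * Real.log n := by nlinarith
      have h7 : Real.log n ≤ t*(k:ℝ) := by
        rw [← div_le_iff₀' htpos]; exact hk1
      nlinarith
    have hep : (0:ℝ) < Real.exp 1 := Real.exp_pos 1
    calc ((m:ℝ)+k) * Real.exp 1 ≤ ((M'+2) * (t*(k:ℝ))) * Real.exp 1 :=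
          mul_le_mul_of_nonneg_right hmk hep.le
      _ = R0 * k := by rw [hR0]; ring
  have h5 : (((m:ℝ)+k) * Real.exp 1 / k)^k ≤ R0^k :=
    pow_le_pow_left₀ (by positivity) hbase k
  have h6 : R0^k ≤ R0 * Real.exp (Real.log n / 4) := by
    have e1 : R0^k = R0^((k:ℕ):ℝ) := (Real.rpow_natCast R0 k).symm
    have e2 : R0^((k:ℕ):ℝ) ≤ R0^(Real.log n / t + 1) :=
      Real.rpow_le_rpow_of_exponent_le hR0ge1 hk2
    have e3 : R0^(Real.log n / t + 1) = R0^(Real.log n / t) * R0 := by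
      rw [Real.rpow_add hR0pos, Real.rpow_one]
    have e4 : R0^(Real.log n / t) = Real.exp (Real.log R0 * (Real.log n / t)) := by
      rw [Real.rpow_def_of_pos hR0pos]
    have e5 : Real.log R0 * (Real.log n / t) ≤ Real.log n / 4 := by
      have hnn : (0:ℝ) ≤ Real.log n / t := by positivity
      have := mul_le_mul_of_nonneg_right hlogR0 hnn
      have e6 : t/4 * (Real.log n / t) = Real.log n / 4 := by
        field_simp
      linarith
    have e7 : Real.exp (Real.log R0 * (Real.log n / t)) ≤ Real.exp (Real.log n / 4) :=
      Real.exp_le_exp.mpr e5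
    calc R0^k = R0^((k:ℕ):ℝ) := e1
      _ ≤ R0^(Real.log n / t + 1) := e2
      _ = R0^(Real.log n / t) * R0 := e3
      _ = Real.exp (Real.log R0 * (Real.log n / t)) * R0 := by rw [e4]
      _ ≤ Real.exp (Real.log n / 4) * R0 := by
          exact mul_le_mul_of_nonneg_right e7 hR0pos.le
      _ = R0 * Real.exp (Real.log n / 4) := by ring
  have h7 : R0 * Real.exp (Real.log n / 4) ≤ (n:ℝ)/2 := by
    have e1 : Real.exp (Real.log n / 4) = (n:ℝ)^((1:ℝ)/4) := by
      rw [Real.rpow_def_of_pos hnpos]; ring_nf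
    have e2 : (n:ℝ)^((3:ℝ)/4) * (n:ℝ)^((1:ℝ)/4) = (n:ℝ) := by
      rw [← Real.rpow_add hnpos]
      norm_num
    have e3 : (0:ℝ) ≤ (n:ℝ)^((1:ℝ)/4) := Real.rpow_nonneg hnpos.le _
    rw [e1]
    nlinarith
  have hS2 : (S.card:ℝ) ≤ (n:ℝ)/2 := by
    have h1 : (S.card : ℝ) ≤ ((m+k).choose k : ℝ) := by exact_mod_cast hScard
    linarith
  -- degree sum
  set T : Finset (Fin n) := Finset.univ.filter (fun v => ¬ G.degree v < k) with hT
  have hST : S.card + T.card = n := by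
    rw [hS, hT, Finset.card_filter_add_card_filter_not]
    simp
  have hTsum : k * T.card ≤ ∑ v, G.degree v := by
    calc k * T.card = ∑ _v ∈ T, k := by rw [Finset.sum_const, mul_comm]; rfl
      _ ≤ ∑ v ∈ T, G.degree v := by
          refine Finset.sum_le_sum fun v hv => ?_
          simp only [hT, Finset.mem_filter] at hv
          exact le_of_not_gt hv.2
      _ ≤ ∑ v, G.degree v := Finset.sum_le_sum_of_subset (Finset.subset_univ T)
  have hhand : ∑ v, G.degree v = 2 * G.edgeFinset.card :=
    SimpleGraph.sum_degrees_eq_twice_card_edges G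
  have hedge : (G.edgeSet.ncard : ℝ) = (G.edgeFinset.card : ℝ) := by
    norm_cast
    simp [Set.ncard_eq_toFinset_card', SimpleGraph.edgeFinset]
  have hTR : (n:ℝ)/2 ≤ (T.card:ℝ) := by
    have : (S.card:ℝ) + (T.card:ℝ) = (n:ℝ) := by exact_mod_cast hST
    linarith
  have hfinal : (k:ℝ) * (T.card:ℝ) ≤ 2 * (G.edgeFinset.card : ℝ) := by
    have := hTsum.trans_eq hhand
    exact_mod_cast this
  have hA : Real.log n / t * ((n:ℝ)/2) ≤ (k:ℝ) * (T.card:ℝ) := by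
    refine mul_le_mul hk1 hTR (by positivity) hkposR.le
  rw [hedge]
  have hident : 1/(4*t) * (n:ℝ) * Real.log n = (Real.log n / t * ((n:ℝ)/2))/2 := by
    field_simp; ring
  linarith
end

section
/- Let G be a graph with identifying code C₀, and define the relation u ≡ v on V(G) to hold iff N(u) ∩ C₀ = N(v) ∩ C₀ and u is not adjacent to v (allowing u = v). Then ≡ is an equivalence relation. -/
/-!
If adjacent vertices `u` and `v` see the same code vertices in their open neighbourhoods, then
neither is a code vertex (a code vertex `u` would lie in `N(v) ∩ C = N(u) ∩ C`), so their closed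
neighbourhoods meet the code in the same set. A separating code forbids this, so vertices with
equal open traces are never adjacent, which makes `≡` transitive.
-/

section

variable {V : Type*} {G : SimpleGraph V} {C : Set V} {u v : V}

theorem notMem_of_adj_of_neighborSet_inter_eq (hadj : G.Adj u v)
    (hN : G.neighborSet u ∩ C = G.neighborSet v ∩ C) : u ∉ C := fun hu =>
  have hmem : u ∈ G.neighborSet u ∩ C := hN ▸ ⟨hadj.symm, hu⟩
  G.loopless.irrefl u hmem.1

theorem closedNbr_inter_eq_of_adj (hadj : G.Adj u v)
    (hN : G.neighborSet u ∩ C = G.neighborSet v ∩ C) :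
    closedNbr G u ∩ C = closedNbr G v ∩ C := by
  rw [closedNbr, closedNbr,
    Set.insert_inter_of_notMem (notMem_of_adj_of_neighborSet_inter_eq hadj hN),
    Set.insert_inter_of_notMem (notMem_of_adj_of_neighborSet_inter_eq hadj.symm hN.symm), hN]

theorem Separating.not_adj_of_neighborSet_inter_eq (hC : Separating G C)
    (hN : G.neighborSet u ∩ C = G.neighborSet v ∩ C) : ¬ G.Adj u v := fun hadj =>
  hC u v hadj.ne (closedNbr_inter_eq_of_adj hadj hN)

end

theorem stmt7_general {V : Type*} (G : SimpleGraph V) (C₀ : Set V)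
    (hC : IsIdCode G C₀) :
    Equivalence (fun u v : V =>
      G.neighborSet u ∩ C₀ = G.neighborSet v ∩ C₀ ∧ ¬ G.Adj u v) :=
  ⟨fun u => ⟨rfl, G.loopless.irrefl u⟩,
    fun ⟨hN, hnadj⟩ => ⟨hN.symm, fun h => hnadj h.symm⟩,
    fun ⟨hN₁, _⟩ ⟨hN₂, _⟩ =>
      ⟨hN₁.trans hN₂, hC.2.not_adj_of_neighborSet_inter_eq (hN₁.trans hN₂)⟩⟩

theorem stmt7 {V : Type*} [Fintype V] (G : SimpleGraph V) (C₀ : Set V)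
    (hC : IsIdCode G C₀) :
    Equivalence (fun u v : V =>
      G.neighborSet u ∩ C₀ = G.neighborSet v ∩ C₀ ∧ ¬ G.Adj u v) :=
  stmt7_general G C₀ hC
end

section
/- Let G be a graph with identifying code C₀, and suppose its complement Ḡ is twin-free. If U = {u₁, …, u_s} is an equivalence class of the relation ≡ (u ≡ v iff N_G(u) ∩ C₀ = N_G(v) ∩ C₀ and u ≁_G v), then there exists a set W of at most s−1 vertices such that every pair of distinct vertices of U is separated in Ḡ by some vertex of W, i.e., for all distinct u, v ∈ U there is w ∈ W with w ∈ N_Ḡ[u] ⊕ N_Ḡ[v]. -/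
def TwinFree {V : Type*} (G : SimpleGraph V) : Prop :=
  ∀ u v : V, u ≠ v → closedNbr G u ≠ closedNbr G v

lemma sep_aux {V : Type*} [Fintype V] (G : SimpleGraph V) (htf : TwinFree G) :
    ∀ (n : ℕ) (U : Set V), U.ncard ≤ n → ∃ W : Set V, W.ncard ≤ U.ncard - 1 ∧
      ∀ u ∈ U, ∀ v ∈ U, u ≠ v → ∃ w ∈ W, w ∈ symmDiff (closedNbr G u) (closedNbr G v) := by
  intro n
  induction n with
  | zero =>
    intro U hU
    refine ⟨∅, by simp, fun u hu v hv huv => ?_⟩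
    have : U = ∅ := (Set.ncard_eq_zero U.toFinite).mp (Nat.le_zero.mp hU)
    simp [this] at hu
  | succ n ih =>
    intro U hU
    by_cases hpair : ∃ u ∈ U, ∃ v ∈ U, u ≠ v
    · obtain ⟨u, hu, v, hv, huv⟩ := hpair
      have hne := htf u v huv
      obtain ⟨w, hw⟩ := Set.symmDiff_nonempty.mpr hne
      rw [Set.mem_symmDiff] at hw
      set U₁ : Set V := {x ∈ U | w ∈ closedNbr G x} with hU₁def
      set U₂ : Set V := {x ∈ U | w ∉ closedNbr G x} with hU₂def
      have hsub₁ : U₁ ⊆ U := fun x hx => hx.1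
      have hsub₂ : U₂ ⊆ U := fun x hx => hx.1
      have hne₁ : U₁.Nonempty := by
        rcases hw with ⟨h1, _⟩ | ⟨h1, _⟩
        · exact ⟨u, hu, h1⟩
        · exact ⟨v, hv, h1⟩
      have hne₂ : U₂.Nonempty := by
        rcases hw with ⟨_, h2⟩ | ⟨_, h2⟩
        · exact ⟨v, hv, h2⟩
        · exact ⟨u, hu, h2⟩
      have hdisj : Disjoint U₁ U₂ := by
        rw [Set.disjoint_left]
        rintro x ⟨-, hx1⟩ ⟨-, hx2⟩
        exact hx2 hx1
      have hunion : U₁ ∪ U₂ = U := by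
        ext x
        constructor
        · rintro (hx | hx) <;> exact hx.1
        · intro hx
          by_cases hxw : w ∈ closedNbr G x
          · exact Or.inl ⟨hx, hxw⟩
          · exact Or.inr ⟨hx, hxw⟩
      have hcard : U₁.ncard + U₂.ncard = U.ncard := by
        rw [← hunion]
        exact (Set.ncard_union_eq hdisj U₁.toFinite U₂.toFinite).symm
      have hlt₁ : U₁.ncard < U.ncard := by
        apply Set.ncard_lt_ncard _ U.toFinite
        refine ⟨hsub₁, fun hsub => ?_⟩
        obtain ⟨x, hx⟩ := hne₂
        exact hx.2 (hsub hx.1).2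
      have hlt₂ : U₂.ncard < U.ncard := by
        apply Set.ncard_lt_ncard _ U.toFinite
        refine ⟨hsub₂, fun hsub => ?_⟩
        obtain ⟨x, hx⟩ := hne₁
        exact (hsub hx.1).2 hx.2
      obtain ⟨W₁, hW₁c, hW₁⟩ := ih U₁ (by omega)
      obtain ⟨W₂, hW₂c, hW₂⟩ := ih U₂ (by omega)
      refine ⟨insert w (W₁ ∪ W₂), ?_, ?_⟩
      · have h1 : (insert w (W₁ ∪ W₂)).ncard ≤ (W₁ ∪ W₂).ncard + 1 :=
          Set.ncard_insert_le _ _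
        have h2 : (W₁ ∪ W₂).ncard ≤ W₁.ncard + W₂.ncard := Set.ncard_union_le _ _
        have hp₁ : 0 < U₁.ncard := hne₁.ncard_pos U₁.toFinite
        have hp₂ : 0 < U₂.ncard := hne₂.ncard_pos U₂.toFinite
        omega
      · intro x hx y hy hxy
        by_cases hxw : w ∈ closedNbr G x <;> by_cases hyw : w ∈ closedNbr G y
        · obtain ⟨w', hw', hsep⟩ := hW₁ x ⟨hx, hxw⟩ y ⟨hy, hyw⟩ hxy
          exact ⟨w', Or.inr (Or.inl hw'), hsep⟩
        · exact ⟨w, Or.inl rfl, Set.mem_symmDiff.mpr (Or.inl ⟨hxw, hyw⟩)⟩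
        · exact ⟨w, Or.inl rfl, Set.mem_symmDiff.mpr (Or.inr ⟨hyw, hxw⟩)⟩
        · obtain ⟨w', hw', hsep⟩ := hW₂ x ⟨hx, hxw⟩ y ⟨hy, hyw⟩ hxy
          exact ⟨w', Or.inr (Or.inr hw'), hsep⟩
    · push_neg at hpair
      refine ⟨∅, by simp, fun x hx y hy hxy => absurd (hpair x hx y hy) (by simp [hxy])⟩

theorem stmt9 {V : Type*} [Fintype V] (G : SimpleGraph V) (C₀ : Set V)
    (hC : IsIdCode G C₀) (htf : TwinFree Gᶜ) (U : Set V)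
    (hU : ∃ u₀ : V, U = {v | G.neighborSet u₀ ∩ C₀ = G.neighborSet v ∩ C₀ ∧ ¬ G.Adj u₀ v}) :
    ∃ W : Set V, W.ncard ≤ U.ncard - 1 ∧
      ∀ u ∈ U, ∀ v ∈ U, u ≠ v →
        ∃ w ∈ W, w ∈ symmDiff (closedNbr Gᶜ u) (closedNbr Gᶜ v) := by
  exact sep_aux Gᶜ htf U.ncard U le_rfl
end

section
/- Let G be a graph with identifying code C₀. For any two distinct vertices u, v such that it is NOT the case that (N_G(u) ∩ C₀ = N_G(v) ∩ C₀ and u ≁ v), the pair u, v is separated by C₀ in the complement Ḡ: there exists w ∈ C₀ with w ∈ N_Ḡ[u] ⊕ N_Ḡ[v]. -/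
theorem stmt10 {V : Type*} [Fintype V] (G : SimpleGraph V) (C₀ : Set V)
    (hC : IsIdCode G C₀) (u v : V) (huv : u ≠ v)
    (h : ¬ (G.neighborSet u ∩ C₀ = G.neighborSet v ∩ C₀ ∧ ¬ G.Adj u v)) :
    ∃ w ∈ C₀, w ∈ symmDiff (closedNbr Gᶜ u) (closedNbr Gᶜ v) := by
  have key : ∀ w x : V, w ≠ x → (w ∈ closedNbr Gᶜ x ↔ ¬ G.Adj x w) := by
    intro w x hwx
    simp only [closedNbr, Set.mem_insert_iff, SimpleGraph.mem_neighborSet,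
      SimpleGraph.compl_adj]
    constructor
    · rintro (rfl | ⟨-, hn⟩)
      · exact absurd rfl hwx
      · exact hn
    · intro hn
      exact Or.inr ⟨fun e => hwx e.symm, hn⟩
  by_cases hadj : G.Adj u v
  · have hne := hC.2 u v huv
    rw [Ne, Set.ext_iff] at hne
    push_neg at hne
    obtain ⟨w, hw⟩ := hne
    simp only [Set.mem_inter_iff] at hw
    have hwC : w ∈ C₀ := by tauto
    have hwu : w ≠ u := by
      rintro rfl
      have h1 : w ∈ closedNbr G w := Set.mem_insert _ _
      have h2 : w ∈ closedNbr G v := Set.mem_insert_of_mem _ hadj.symm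
      tauto
    have hwv : w ≠ v := by
      rintro rfl
      have h1 : w ∈ closedNbr G w := Set.mem_insert _ _
      have h2 : w ∈ closedNbr G u := Set.mem_insert_of_mem _ hadj
      tauto
    have hu : w ∈ closedNbr G u ↔ G.Adj u w := by
      simp [closedNbr, hwu]
    have hv : w ∈ closedNbr G v ↔ G.Adj v w := by
      simp [closedNbr, hwv]
    refine ⟨w, hwC, ?_⟩
    rw [Set.mem_symmDiff, key w u hwu, key w v hwv]
    tauto
  · have hne : G.neighborSet u ∩ C₀ ≠ G.neighborSet v ∩ C₀ := by tauto
    rw [Ne, Set.ext_iff] at hne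
    push_neg at hne
    obtain ⟨w, hw⟩ := hne
    simp only [Set.mem_inter_iff, SimpleGraph.mem_neighborSet] at hw
    have hwC : w ∈ C₀ := by tauto
    have hwu : w ≠ u := by
      rintro rfl
      have h1 : ¬ G.Adj w w := G.irrefl
      have h2 : ¬ G.Adj v w := fun e => hadj e.symm
      tauto
    have hwv : w ≠ v := by
      rintro rfl
      have h1 : ¬ G.Adj w w := G.irrefl
      have h2 : ¬ G.Adj u w := fun e => hadj e
      tauto
    refine ⟨w, hwC, ?_⟩
    rw [Set.mem_symmDiff, key w u hwu, key w v hwv]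
    tauto
end

section
/- For any M ≥ 0 there exists a constant c > 0 such that for all sufficiently large n: for any set F of edges of the complete graph K_n, if γ^ID(K_n \ F) ≤ M·log n then |F| ≥ c·n·log n. -/
/-!
Let `C` be an identifying code of `Kₙ \ F` with `k ≤ M log n` vertices. For `v ∉ C` the trace
`N[v] ∩ C` is `C` minus the set `D v` of code vertices joined to `v` by an edge of `F`, so `D` is
injective outside `C`, and the edges `{v, c}` with `c ∈ D v` are distinct edges of `F`.
Weighting each `D v` by `x ^ #(D v)` and comparing with `∑_{S ⊆ C} x ^ #S = (1 + x) ^ k` shows that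
at most `(1 + x) ^ k / x ^ τ` vertices have `#(D v) ≤ τ`. For `x = 1 / q` with `q ≈ 4M` and
`τ = log n / (4 log q)` this is at most `√n`, so about `n / 2` vertices each contribute more than
`τ` edges to `F`.
-/

open Finset Filter Asymptotics Real

lemma card_filter_card_le_mul_rpow_le {ι α : Type*} {s : Finset ι} {C : Finset α}
    {D : ι → Finset α} (hD : Set.InjOn D s) (hDC : ∀ i ∈ s, D i ⊆ C) {x : ℝ} (hx₀ : 0 < x)
    (hx₁ : x ≤ 1) (τ : ℝ) :
    #{i ∈ s | (#(D i) : ℝ) ≤ τ} * x ^ τ ≤ (1 + x) ^ #C := by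
  classical
  set S := {i ∈ s | (#(D i) : ℝ) ≤ τ}
  calc (#S : ℝ) * x ^ τ = ∑ _i ∈ S, x ^ τ := by rw [sum_const, nsmul_eq_mul]
    _ ≤ ∑ i ∈ S, x ^ #(D i) := sum_le_sum fun i hi => by
        rw [← rpow_natCast]
        exact rpow_le_rpow_of_exponent_ge hx₀ hx₁ (mem_filter.1 hi).2
    _ = ∑ T ∈ S.image D, x ^ #T := by rw [sum_image (hD.mono (coe_subset.2 (filter_subset _ _)))]
    _ ≤ ∑ T ∈ C.powerset, x ^ #T := by
        refine sum_le_sum_of_subset_of_nonneg (image_subset_iff.2 fun i hi => ?_)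
          fun _ _ _ => by positivity
        exact mem_powerset.2 (hDC i (mem_filter.1 hi).1)
    _ = (1 + x) ^ #C := by simpa [add_comm] using sum_pow_mul_eq_add_pow x 1 C

section DeletedNeighbours

variable {V : Type*}

open Classical in
noncomputable def deletedNbrs (F : Set (Sym2 V)) (C : Finset V) (v : V) : Finset V :=
  {c ∈ C | s(v, c) ∈ F}

variable {F : Set (Sym2 V)} {C : Finset V}

lemma deletedNbrs_subset (v : V) : deletedNbrs F C v ⊆ C := by
  classical
  exact filter_subset _ _

variable [DecidableEq V]

lemma closedNbr_deleteEdges_inter {v : V} (hv : v ∉ C) :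
    closedNbr ((⊤ : SimpleGraph V).deleteEdges F) v ∩ C = ↑(C \ deletedNbrs F C v) := by
  ext c
  by_cases hc : c ∈ C
  · have hvc : v ≠ c := by rintro rfl; exact hv hc
    simp [closedNbr, deletedNbrs, hc, hvc, eq_comm]
  · simp [hc]

lemma Separating.injOn_deletedNbrs [Fintype V]
    (hC : Separating ((⊤ : SimpleGraph V).deleteEdges F) C) :
    Set.InjOn (deletedNbrs F C) ↑Cᶜ := by
  intro u hu v hv huv
  by_contra hne
  apply hC u v hne
  rw [closedNbr_deleteEdges_inter (by simpa using hu),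
    closedNbr_deleteEdges_inter (by simpa using hv), huv]

lemma sum_card_deletedNbrs_le_ncard [Fintype V] :
    ∑ v ∈ Cᶜ, #(deletedNbrs F C v) ≤ F.ncard := by
  rw [← card_sigma, ← Set.ncard_coe_finset]
  refine Set.ncard_le_ncard_of_injOn (fun p => s(p.1, p.2)) (fun p hp => ?_) ?_
  · classical
    exact (mem_filter.1 (mem_sigma.1 hp).2).2
  · rintro ⟨u, c⟩ hu ⟨v, c'⟩ hv h
    simp only [coe_sigma, Set.mem_sigma_iff, mem_coe, mem_compl, deletedNbrs, mem_filter] at hu hv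
    rcases Sym2.eq_iff.1 h with ⟨rfl, rfl⟩ | ⟨rfl, rfl⟩
    · rfl
    · exact absurd hv.2.1 hu.1

lemma Separating.mul_sub_le_ncard [Fintype V]
    (hC : Separating ((⊤ : SimpleGraph V).deleteEdges F) C) {x τ : ℝ} (hx₀ : 0 < x)
    (hx₁ : x ≤ 1) (hτ : 0 ≤ τ) :
    τ * (Fintype.card V - #C - (1 + x) ^ #C / x ^ τ) ≤ F.ncard := by
  set D := deletedNbrs F C
  set small := {v ∈ Cᶜ | (#(D v) : ℝ) ≤ τ}
  set large := {v ∈ Cᶜ | ¬(#(D v) : ℝ) ≤ τ}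
  have hsmall : (#small : ℝ) ≤ (1 + x) ^ #C / x ^ τ := (le_div_iff₀ (by positivity)).2 <|
    card_filter_card_le_mul_rpow_le hC.injOn_deletedNbrs (fun v _ => deletedNbrs_subset v) hx₀
      hx₁ τ
  have hsplit : (#small : ℝ) + #large = Fintype.card V - #C := by
    rw [← card_compl_add_card C, ← card_filter_add_card_filter_not (s := Cᶜ)
      (fun v => (#(D v) : ℝ) ≤ τ)]
    push_cast
    ring
  have hlarge : τ * #large ≤ ∑ v ∈ large, (#(D v) : ℝ) := by
    simpa [mul_comm] using card_nsmul_le_sum large (fun v => (#(D v) : ℝ)) τ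
      fun v hv => le_of_not_ge (mem_filter.1 hv).2
  calc τ * (Fintype.card V - #C - (1 + x) ^ #C / x ^ τ) ≤ τ * #large :=
        mul_le_mul_of_nonneg_left (by linarith) hτ
    _ ≤ ∑ v ∈ large, (#(D v) : ℝ) := hlarge
    _ ≤ ∑ v ∈ Cᶜ, (#(D v) : ℝ) :=
        sum_le_sum_of_subset_of_nonneg (filter_subset _ _) fun _ _ _ => by positivity
    _ ≤ F.ncard := by exact_mod_cast sum_card_deletedNbrs_le_ncard

end DeletedNeighbours

lemma one_add_inv_pow_div_inv_rpow_le {q L : ℝ} (hq : 1 < q) {k : ℕ} (hk : k ≤ q * L / 4) :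
    (1 + q⁻¹) ^ k / q⁻¹ ^ (L / (4 * log q)) ≤ exp (L / 2) := by
  have hlogq : 0 < log q := log_pos hq
  have hpow : (1 + q⁻¹) ^ k ≤ exp (L / 4) := calc
    (1 + q⁻¹) ^ k ≤ exp q⁻¹ ^ k := by gcongr; linarith [add_one_le_exp q⁻¹]
    _ = exp (k * q⁻¹) := (exp_nat_mul _ _).symm
    _ ≤ exp (L / 4) := by
        gcongr
        rw [← div_eq_mul_inv, div_le_iff₀ (by linarith)]
        linarith
  have hrpow : q⁻¹ ^ (L / (4 * log q)) = exp (-(L / 4)) := by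
    rw [rpow_def_of_pos (by positivity), log_inv]
    field_simp
  rw [hrpow, div_eq_mul_inv, ← exp_neg, neg_neg]
  calc (1 + q⁻¹) ^ k * exp (L / 4) ≤ exp (L / 4) * exp (L / 4) := by gcongr
    _ = exp (L / 2) := by rw [← exp_add]; ring_nf

lemma eventually_mul_log_add_sqrt_le (M : ℝ) :
    ∀ᶠ n : ℕ in atTop, M * log n + √n ≤ n / 2 := by
  have hsqrt : (fun x : ℝ => √x) =o[atTop] id := isLittleO_abs_right.1 <| by
    simpa [sqrt_sq_eq_abs] using (isLittleO_pow_pow_atTop_of_lt (𝕜 := ℝ) one_lt_two).sqrt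
      (Eventually.of_forall fun x => sq_nonneg x)
  have h := ((isLittleO_log_id_atTop.const_mul_left M).add hsqrt).natCast_atTop
  filter_upwards [h.bound (by norm_num : (0 : ℝ) < 1 / 2)] with n hn
  simp only [id, norm_natCast] at hn
  linarith [le_abs_self (M * log n + √n), (norm_eq_abs _).symm.trans_le hn]

theorem stmt11_general (M : ℝ) :
    ∃ c : ℝ, 0 < c ∧ ∃ N : ℕ, ∀ n ≥ N, ∀ F : Set (Sym2 (Fin n)),
      F ⊆ (⊤ : SimpleGraph (Fin n)).edgeSet →
      (∃ C : Set (Fin n),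
        IsIdCode ((⊤ : SimpleGraph (Fin n)).deleteEdges F) C ∧
        (C.ncard : ℝ) ≤ M * Real.log n) →
      c * n * Real.log n ≤ (F.ncard : ℝ) := by
  -- with `τ = log n / (4 log q)`, both `(1 + q⁻¹) ^ #C` and `q ^ τ` are at most `n ^ (1/4)`
  set q : ℝ := 4 * |M| + 2
  have hq : 1 < q := by linarith [abs_nonneg M]
  have hlogq : 0 < log q := log_pos hq
  refine ⟨1 / (8 * log q), by positivity, ?_⟩
  obtain ⟨N, hN⟩ :=
    eventually_atTop.1 ((eventually_mul_log_add_sqrt_le M).and (eventually_gt_atTop 0))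
  refine ⟨N, ?_⟩
  rintro n hn F - ⟨C, ⟨-, hsep⟩, hC⟩
  obtain ⟨hgrowth, hn₀⟩ := hN n hn
  obtain ⟨C, rfl⟩ : ∃ C' : Finset (Fin n), ↑C' = C := ⟨C.toFinite.toFinset, by simp⟩
  rw [Set.ncard_coe_finset] at hC
  have hL : 0 ≤ log n := log_natCast_nonneg n
  have hk : (#C : ℝ) ≤ q * log n / 4 := by nlinarith [le_abs_self M]
  have hτ : 0 ≤ log n / (4 * log q) := by positivity
  have hsmall := (one_add_inv_pow_div_inv_rpow_le hq hk).trans_eq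
    (by rw [← log_sqrt n.cast_nonneg, exp_log (by positivity)] : exp (log n / 2) = √n)
  have hF := hsep.mul_sub_le_ncard (x := q⁻¹) (by positivity) (inv_le_one_of_one_le₀ hq.le) hτ
  rw [Fintype.card_fin] at hF
  calc 1 / (8 * log q) * n * log n = log n / (4 * log q) * (n / 2) := by ring
    _ ≤ log n / (4 * log q) * (n - #C - (1 + q⁻¹) ^ #C / q⁻¹ ^ (log n / (4 * log q))) := by
        gcongr
        linarith
    _ ≤ F.ncard := hF

theorem stmt11 (M : ℝ) (hM : 0 ≤ M) :
    ∃ c : ℝ, 0 < c ∧ ∃ N : ℕ, ∀ n ≥ N, ∀ F : Set (Sym2 (Fin n)),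
      F ⊆ (⊤ : SimpleGraph (Fin n)).edgeSet →
      (∃ C : Set (Fin n),
        IsIdCode ((⊤ : SimpleGraph (Fin n)).deleteEdges F) C ∧
        (C.ncard : ℝ) ≤ M * Real.log n) →
      c * n * Real.log n ≤ (F.ncard : ℝ) :=
  stmt11_general M
end

section
/- Let G be the complete bipartite graph K_{r,s} with parts V₁ of size r and V₂ of size s = 2^{2r}. Then for every spanning subgraph H of G that admits an identifying code, every identifying code C of H satisfies |C| ≥ 2^{2r} − 2^r. In particular γ^ID(H) ≥ (1−o(1))·n where n = r + 2^{2r}. -/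
theorem stmt12 (r : ℕ) (H : SimpleGraph (Fin r ⊕ Fin (2 ^ (2 * r))))
    (hH : H ≤ completeBipartiteGraph (Fin r) (Fin (2 ^ (2 * r))))
    (C : Set (Fin r ⊕ Fin (2 ^ (2 * r)))) (hC : IsIdCode H C) :
    2 ^ (2 * r) - 2 ^ r ≤ C.ncard := by
  classical
  set A : Set (Fin (2 ^ (2 * r))) := {u | Sum.inr u ∈ C} with hA
  -- no inr-inr adjacency
  have hadj : ∀ u v : Fin (2 ^ (2 * r)), ¬ H.Adj (Sum.inr u) (Sum.inr v) := by
    intro u v h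
    have := hH h
    simp [completeBipartiteGraph] at this
  -- injection from Aᶜ into subsets of Fin r
  have hinj : Function.Injective (fun u : ↥Aᶜ =>
      ({x | Sum.inl x ∈ closedNbr H (Sum.inr u.1) ∩ C} : Set (Fin r))) := by
    rintro ⟨u, hu⟩ ⟨v, hv⟩ h
    simp only at h
    ext1
    by_contra hne
    have hne' : (Sum.inr u : Fin r ⊕ Fin (2 ^ (2 * r))) ≠ Sum.inr v := by
      simpa using hne
    apply hC.2 _ _ hne'
    ext w
    cases w with
    | inl x =>
      constructor
      · intro hx
        have : x ∈ ({x | Sum.inl x ∈ closedNbr H (Sum.inr u) ∩ C} : Set (Fin r)) := hx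
        rw [h] at this
        exact this
      · intro hx
        have : x ∈ ({x | Sum.inl x ∈ closedNbr H (Sum.inr v) ∩ C} : Set (Fin r)) := hx
        rw [← h] at this
        exact this
    | inr y =>
      constructor
      · rintro ⟨h1, h2⟩
        rcases h1 with h1 | h1
        · exact absurd (show Sum.inr u ∈ C from h1 ▸ h2) hu
        · exact absurd h1 (hadj _ _)
      · rintro ⟨h1, h2⟩
        rcases h1 with h1 | h1
        · exact absurd (show Sum.inr v ∈ C from h1 ▸ h2) hv
        · exact absurd h1 (hadj _ _)
  have hcard : (Aᶜ : Set (Fin (2 ^ (2 * r)))).ncard ≤ 2 ^ r := by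
    have h1 := Nat.card_le_card_of_injective _ hinj
    rw [Nat.card_coe_set_eq] at h1
    simpa [Nat.card_eq_fintype_card] using h1
  have hsum : A.ncard + (Aᶜ).ncard = 2 ^ (2 * r) := by
    have := Set.ncard_add_ncard_compl A
    simpa [Nat.card_eq_fintype_card] using this
  have hAC : A.ncard ≤ C.ncard := by
    have himg : Sum.inr '' A ⊆ C := by rintro _ ⟨u, hu, rfl⟩; exact hu
    calc A.ncard = (Sum.inr '' A).ncard :=
          (Set.ncard_image_of_injective A Sum.inr_injective).symm
      _ ≤ C.ncard := Set.ncard_le_ncard himg C.toFinite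
  omega
end

section
/- Every twin-free graph G possesses a watching number at most the minimum, over all spanning subgraphs H of G that are twin-free, of γ^ID(H): w(G) ≤ min { γ^ID(H) : H spanning subgraph of G, H twin-free }. -/
noncomputable def idNum {V : Type*} [Fintype V] (G : SimpleGraph V) : ℕ :=
  sInf {k | ∃ C : Set V, IsIdCode G C ∧ C.ncard = k}

/-- A watching system: a finite set of watchers `(v, Z)` with nonempty zone
`Z ⊆ N[v]`, such that every vertex is in some zone and distinct vertices lie in
distinct sets of zones. -/
def IsWatchingSystem {V : Type*} (G : SimpleGraph V) (W : Finset (V × Set V)) : Prop :=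
  (∀ w ∈ W, (w.2 : Set V).Nonempty ∧ w.2 ⊆ closedNbr G w.1) ∧
  (∀ u : V, ∃ w ∈ W, u ∈ w.2) ∧
  (∀ u v : V, (∀ w ∈ W, (u ∈ w.2 ↔ v ∈ w.2)) → u = v)

/-- The watching number of `G`. -/
noncomputable def watchNum {V : Type*} [Fintype V] (G : SimpleGraph V) : ℕ :=
  sInf {k | ∃ W : Finset (V × Set V), IsWatchingSystem G W ∧ W.card = k}
theorem stmt13 {V : Type*} [Fintype V] (G : SimpleGraph V) (htf : TwinFree G)
    (H : SimpleGraph V) (hH : H ≤ G) (htfH : TwinFree H) :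
    watchNum G ≤ idNum H := by
  classical
  have hmem : idNum H ∈ {k | ∃ C : Set V, IsIdCode H C ∧ C.ncard = k} := by
    apply Nat.sInf_mem
    refine ⟨(Set.univ : Set V).ncard, Set.univ, ⟨?_, ?_⟩, rfl⟩
    · intro v hv; exact absurd (Set.mem_univ v) hv
    · intro u v huv; simpa using htfH u v huv
  obtain ⟨C, ⟨hdom, hsep⟩, hcard⟩ := hmem
  have hsymm : ∀ a b : V, a ∈ closedNbr H b ↔ b ∈ closedNbr H a := by
    intro a b
    simp only [closedNbr, Set.mem_insert_iff, SimpleGraph.mem_neighborSet]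
    constructor <;> rintro (rfl | h)
    · exact Or.inl rfl
    · exact Or.inr h.symm
    · exact Or.inl rfl
    · exact Or.inr h.symm
  set W : Finset (V × Set V) := C.toFinset.image (fun c => (c, closedNbr H c)) with hW
  have hmemW : ∀ c : V, c ∈ C → (c, closedNbr H c) ∈ W := by
    intro c hc
    exact Finset.mem_image.mpr ⟨c, Set.mem_toFinset.mpr hc, rfl⟩
  have hws : IsWatchingSystem G W := by
    refine ⟨?_, ?_, ?_⟩
    · intro w hw
      obtain ⟨c, hc, rfl⟩ := Finset.mem_image.mp hw
      refine ⟨⟨c, Set.mem_insert _ _⟩, ?_⟩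
      intro x hx
      rcases hx with rfl | hx
      · exact Set.mem_insert _ _
      · exact Set.mem_insert_of_mem _ (hH hx)
    · intro u
      by_cases hu : u ∈ C
      · exact ⟨(u, closedNbr H u), hmemW u hu, Set.mem_insert _ _⟩
      · obtain ⟨c, hc, hadj⟩ := hdom u hu
        exact ⟨(c, closedNbr H c), hmemW c hc,
          Set.mem_insert_of_mem _ (by simpa using hadj.symm)⟩
    · intro u v h
      by_contra hne
      apply hsep u v hne
      ext c
      simp only [Set.mem_inter_iff]
      constructor
      · rintro ⟨h1, h2⟩
        exact ⟨(hsymm v c).mp ((h _ (hmemW c h2)).mp ((hsymm c u).mp h1)), h2⟩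
      · rintro ⟨h1, h2⟩
        exact ⟨(hsymm u c).mp ((h _ (hmemW c h2)).mpr ((hsymm c v).mp h1)), h2⟩
  have hcardW : W.card = idNum H := by
    rw [hW, Finset.card_image_of_injective _ (fun a b hab => congrArg Prod.fst hab), ← Set.ncard_eq_toFinset_card']
    exact hcard
  calc watchNum G ≤ W.card := Nat.sInf_le ⟨W, hws, rfl⟩
    _ = idNum H := hcardW
end
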